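/- For every integer t ≥ 3 and every integer n, 4·P₁ − P₂ equals 2^{t+1} if n is odd and 2^{t+2} if n is even, where P₁ is the number of pairs (y,z) ∈ (ℤ/2^tℤ)² with y·z = n and P₂ is the number of pairs (y,z) ∈ (ℤ/2^tℤ)² with 4·y·z = n. -/

import Mathlib

/-- The number of solutions `(y,z)` in `ℤ/2^tℤ` of `y z = n`. -/
noncomputable def P1 (t : ℕ) (n : ℤ) : ℕ :=
  Nat.card {v : ZMod (2 ^ t) × ZMod (2 ^ t) | v.1 * v.2 = (n : ZMod (2 ^ t))}

/-- The number of solutions `(y,z)` in `ℤ/2^tℤ` of `4 y z = n`. -/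
noncomputable def P2 (t : ℕ) (n : ℤ) : ℕ :=
  Nat.card {v : ZMod (2 ^ t) × ZMod (2 ^ t) | 4 * v.1 * v.2 = (n : ZMod (2 ^ t))}

/-!
A solution of `y z = c` in `ℤ/2^(s+1)` with `y` a unit is determined by `y`, so there are
`φ(2^(s+1)) = 2^s` of them; a non-unit `y` is `2 y'`, with `y'` determined modulo `2^s`.
Since `k x = k x'` in `ℤ/(k d)` exactly when `x ≡ x' (mod d)`, reducing modulo `2^s` gives
`P1 (s+1) (2m) = 2^s + 2 P1 s m` and `P2 (s+2) (4m) = 16 P1 s m`, and `P2 t n = 0` unless `4 ∣ n`.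
Splitting `n` into the cases odd, twice an odd number, and divisible by `4` gives the theorem.
-/

theorem Nat.card_subtype_comp_eq_mul {α β : Type*} [Finite α] [Finite β] (f : α → β)
    (p : β → Prop) (k : ℕ) (hf : ∀ b, p b → Nat.card {a // f a = b} = k) :
    Nat.card {a // p (f a)} = k * Nat.card {b // p b} := by
  classical
  have := Fintype.ofFinite {b // p b}
  rw [← Nat.card_congr (Equiv.sigmaSubtypeFiberEquivSubtype f fun _ => Iff.rfl), Nat.card_sigma,
    Finset.sum_congr rfl fun b _ => hf b.1 b.2, Finset.sum_const, Finset.card_univ, smul_eq_mul,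
    Nat.card_eq_fintype_card, mul_comm]

theorem Nat.card_mul_eq_card_units_add_card_not_isUnit {R : Type*} [CommMonoid R] [Finite R]
    (c : R) :
    Nat.card {v : R × R // v.1 * v.2 = c} =
      Nat.card Rˣ + Nat.card {v : R × R // v.1 * v.2 = c ∧ ¬IsUnit v.1} := by
  have units : {v : R × R // v.1 * v.2 = c ∧ IsUnit v.1} ≃ Rˣ :=
    { toFun := fun v => v.2.2.unit
      invFun := fun u => ⟨(u, ((u⁻¹ : Rˣ) : R) * c), by simp, u.isUnit⟩
      left_inv := fun ⟨⟨y, z⟩, hyz, hy⟩ => by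
        ext
        · rfl
        · simp [← hyz, ← mul_assoc]
      right_inv := fun u => Units.ext rfl }
  rw [← Nat.card_congr units]
  exact (Set.ncard_inter_add_ncard_sdiff_eq_ncard {v : R × R | v.1 * v.2 = c} {v | IsUnit v.1}
    (Set.toFinite _)).symm

theorem ZMod.card_cast_fiber {d N : ℕ} [NeZero N] (h : d ∣ N) (y : ZMod d) :
    Nat.card {x : ZMod N // (ZMod.cast x : ZMod d) = y} = N / d := by
  classical
  have : NeZero d := ⟨fun hd => NeZero.ne N (Nat.eq_zero_of_zero_dvd (hd ▸ h))⟩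
  set σ := ZMod.castHom h (ZMod d)
  have hfib : ∀ y', (Finset.univ.filter fun x => σ x = y').card =
      (Finset.univ.filter fun x => σ x = y).card := fun y' =>
    AddMonoidHom.card_fiber_eq_of_mem_range σ (ZMod.castHom_surjective h y')
      (ZMod.castHom_surjective h y)
  have hN : N = d * (Finset.univ.filter fun x => σ x = y).card := by
    conv_lhs => rw [← ZMod.card N, ← Finset.card_univ,
      Finset.card_eq_sum_card_fiberwise (f := σ) (t := Finset.univ) (by simp)]
    rw [Finset.sum_congr rfl fun y' _ => hfib y', Finset.sum_const, Finset.card_univ, ZMod.card,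
      smul_eq_mul]
  rw [Nat.card_eq_fintype_card, Fintype.card_subtype]
  exact (Nat.div_eq_of_eq_mul_right (NeZero.pos d) hN).symm

theorem ZMod.natCast_mul_eq_natCast_mul_iff {k d N : ℕ} (hk : k ≠ 0) (hN : N = k * d)
    (x y : ZMod N) :
    (k : ZMod N) * x = k * y ↔ (ZMod.cast x : ZMod d) = ZMod.cast y := by
  subst hN
  obtain ⟨a, rfl⟩ := ZMod.intCast_surjective x
  obtain ⟨b, rfl⟩ := ZMod.intCast_surjective y
  rw [ZMod.cast_intCast (Dvd.intro_left k rfl), ZMod.cast_intCast (Dvd.intro_left k rfl),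
    ← Int.cast_natCast, ← Int.cast_mul, ← Int.cast_mul, ZMod.intCast_eq_intCast_iff_dvd_sub,
    ZMod.intCast_eq_intCast_iff_dvd_sub, ← mul_sub, Nat.cast_mul,
    mul_dvd_mul_iff_left (by exact_mod_cast hk)]

theorem ZMod.card_natCast_mul_mul_eq {k d N : ℕ} [NeZero N] (hk : k ≠ 0) (hN : N = k * d)
    (m : ℤ) :
    Nat.card {v : ZMod N × ZMod N // (k : ZMod N) * v.1 * v.2 = k * m} =
      k ^ 2 * Nat.card {u : ZMod d × ZMod d // u.1 * u.2 = m} := by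
  have hd : d ∣ N := hN ▸ Dvd.intro_left k rfl
  have hd0 : d ≠ 0 := by rintro rfl; exact NeZero.ne N (by simpa using hN)
  have : NeZero d := ⟨hd0⟩
  have hfib : ∀ u : ZMod d × ZMod d,
      Nat.card {v : ZMod N × ZMod N // ((ZMod.cast v.1 : ZMod d), (ZMod.cast v.2 : ZMod d)) = u}
        = k ^ 2 := by
    intro u
    rw [Nat.card_congr ((Equiv.subtypeEquivRight fun v => Prod.ext_iff).trans
      (Equiv.subtypeProdEquivProd (p := fun x : ZMod N => (ZMod.cast x : ZMod d) = u.1)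
        (q := fun x : ZMod N => (ZMod.cast x : ZMod d) = u.2))),
      Nat.card_prod, ZMod.card_cast_fiber hd, ZMod.card_cast_fiber hd, hN,
      Nat.mul_div_cancel k (Nat.pos_of_ne_zero hd0), sq]
  have hcond : ∀ v : ZMod N × ZMod N, (k : ZMod N) * v.1 * v.2 = k * m ↔
      (ZMod.cast v.1 : ZMod d) * ZMod.cast v.2 = m := by
    intro v
    rw [mul_assoc, ZMod.natCast_mul_eq_natCast_mul_iff hk hN, ZMod.cast_mul hd,
      ZMod.cast_intCast hd]
  rw [Nat.card_congr (Equiv.subtypeEquivRight hcond),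
    Nat.card_subtype_comp_eq_mul
      (fun v : ZMod N × ZMod N => ((ZMod.cast v.1 : ZMod d), (ZMod.cast v.2 : ZMod d)))
      (fun u => u.1 * u.2 = m) (k ^ 2) fun u _ => hfib u]

theorem ZMod.not_isUnit_iff_exists_eq_mul {p k : ℕ} (hp : p.Prime) (y : ZMod (p ^ (k + 1))) :
    ¬IsUnit y ↔ ∃ x, y = p * x := by
  have : NeZero (p ^ (k + 1)) := ⟨pow_ne_zero _ hp.ne_zero⟩
  constructor
  · intro hy
    rw [← ZMod.natCast_zmod_val y, ZMod.isUnit_natCast_iff_not_dvd_pow hp k.succ_pos,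
      not_not] at hy
    obtain ⟨a, ha⟩ := hy
    exact ⟨a, by rw [← ZMod.natCast_zmod_val y, ha, Nat.cast_mul]⟩
  · rintro ⟨x, rfl⟩ h
    exact ZMod.prime_natCast_not_isUnit_pow hp k.succ_pos (isUnit_of_mul_isUnit_left h)

theorem ZMod.isUnit_intCast_of_odd {n : ℤ} (hn : Odd n) (t : ℕ) :
    IsUnit (n : ZMod (2 ^ t)) := by
  obtain ⟨k, rfl⟩ := hn
  rw [ZMod.coe_int_isUnit_iff_isCoprime, Nat.cast_pow, Nat.cast_ofNat]
  exact IsCoprime.pow_left ⟨-k, 1, by ring⟩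

theorem ZMod.card_units_two_pow_succ (s : ℕ) : Nat.card (ZMod (2 ^ (s + 1)))ˣ = 2 ^ s := by
  rw [Nat.card_eq_fintype_card, ZMod.card_units_eq_totient,
    Nat.totient_prime_pow_succ Nat.prime_two, Nat.add_one_sub_one, mul_one]

theorem P1_of_odd {n : ℤ} (hn : Odd n) (s : ℕ) : P1 (s + 1) n = 2 ^ s := by
  have hnonunit : IsEmpty {v : ZMod (2 ^ (s + 1)) × ZMod (2 ^ (s + 1)) //
      v.1 * v.2 = n ∧ ¬IsUnit v.1} :=
    ⟨fun ⟨v, hv, hv1⟩ =>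
      hv1 (isUnit_of_mul_isUnit_left (hv ▸ ZMod.isUnit_intCast_of_odd hn _))⟩
  rw [P1, Set.coe_ofPred, Nat.card_mul_eq_card_units_add_card_not_isUnit,
    ZMod.card_units_two_pow_succ, Nat.card_of_isEmpty, add_zero]

theorem P2_eq_zero_of_not_dvd {t : ℕ} (ht : 2 ≤ t) {n : ℤ} (hn : ¬4 ∣ n) : P2 t n = 0 := by
  refine @Nat.card_of_isEmpty _ ⟨fun ⟨⟨y, z⟩, hyz⟩ => hn ?_⟩
  obtain ⟨a, rfl⟩ := ZMod.intCast_surjective y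
  obtain ⟨b, rfl⟩ := ZMod.intCast_surjective z
  have h4 : (4 : ℤ) ∣ 2 ^ t := by simpa using pow_dvd_pow (2 : ℤ) ht
  have hyz : ((4 * a * b : ℤ) : ZMod (2 ^ t)) = n := by push_cast; exact hyz
  rw [ZMod.intCast_eq_intCast_iff_dvd_sub, Nat.cast_pow, Nat.cast_ofNat] at hyz
  exact (dvd_sub_left (dvd_mul_of_dvd_left (dvd_mul_right 4 a) b)).mp (h4.trans hyz)

theorem P2_four_mul (s : ℕ) (m : ℤ) : P2 (s + 2) (4 * m) = 16 * P1 s m := by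
  have h := ZMod.card_natCast_mul_mul_eq (k := 4) (d := 2 ^ s) (N := 2 ^ (s + 2)) four_ne_zero
    (by ring) m
  rw [Nat.cast_ofNat] at h
  rw [P1, P2, Set.coe_ofPred, Set.coe_ofPred, Int.cast_mul, Int.cast_ofNat, h]
  norm_num

theorem P1_two_mul (s : ℕ) (m : ℤ) : P1 (s + 1) (2 * m) = 2 ^ s + 2 * P1 s m := by
  have hN : 2 ^ (s + 1) = 2 * 2 ^ s := pow_succ' 2 s
  have hfib : ∀ u : ZMod (2 ^ (s + 1)) × ZMod (2 ^ (s + 1)), ¬IsUnit u.1 →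
      Nat.card {w : ZMod (2 ^ (s + 1)) × ZMod (2 ^ (s + 1)) // (2 * w.1, w.2) = u} = 2 := by
    rintro ⟨y, z⟩ hy
    obtain ⟨y₀, rfl⟩ := (ZMod.not_isUnit_iff_exists_eq_mul Nat.prime_two y).mp hy
    rw [Nat.card_congr ((Equiv.subtypeEquivRight fun w => Prod.ext_iff).trans
      (Equiv.subtypeProdEquivProd (p := fun x => 2 * x = 2 * y₀) (q := fun x => x = z))),
      Nat.card_prod, Nat.card_unique (α := {x // x = z}), mul_one]
    have hcond (x : ZMod (2 ^ (s + 1))) :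
        2 * x = 2 * y₀ ↔ (ZMod.cast x : ZMod (2 ^ s)) = ZMod.cast y₀ := by
      exact_mod_cast ZMod.natCast_mul_eq_natCast_mul_iff two_ne_zero hN x y₀
    rw [Nat.card_congr (Equiv.subtypeEquivRight hcond),
      ZMod.card_cast_fiber (Dvd.intro_left 2 hN.symm), hN, Nat.mul_div_cancel _ (by positivity)]
  have hdouble := Nat.card_subtype_comp_eq_mul
    (fun w : ZMod (2 ^ (s + 1)) × ZMod (2 ^ (s + 1)) => (2 * w.1, w.2))
    (fun v => v.1 * v.2 = (2 * m : ℤ) ∧ ¬IsUnit v.1) 2 fun u hu => hfib u hu.2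
  have hfour := ZMod.card_natCast_mul_mul_eq (k := 2) (d := 2 ^ s) two_ne_zero hN m
  have hdouble_iff (w : ZMod (2 ^ (s + 1)) × ZMod (2 ^ (s + 1))) :
      2 * w.1 * w.2 = ((2 * m : ℤ) : ZMod (2 ^ (s + 1))) ∧ ¬IsUnit (2 * w.1) ↔
        ((2 : ℕ) : ZMod (2 ^ (s + 1))) * w.1 * w.2 = (2 : ℕ) * m := by
    have h2 : ¬IsUnit (2 * w.1) := by
      exact_mod_cast (ZMod.not_isUnit_iff_exists_eq_mul Nat.prime_two _).mpr ⟨w.1, rfl⟩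
    push_cast
    exact and_iff_left h2
  rw [Nat.card_congr (Equiv.subtypeEquivRight hdouble_iff), hfour] at hdouble
  rw [P1, P1, Set.coe_ofPred, Set.coe_ofPred, Nat.card_mul_eq_card_units_add_card_not_isUnit,
    ZMod.card_units_two_pow_succ]
  omega

theorem dyadic_pair_count (t : ℕ) (ht : 3 ≤ t) (n : ℤ) :
    (Odd n → 4 * (P1 t n : ℤ) - (P2 t n : ℤ) = 2 ^ (t + 1)) ∧
    (Even n → 4 * (P1 t n : ℤ) - (P2 t n : ℤ) = 2 ^ (t + 2)) := by
  obtain ⟨s, rfl⟩ : ∃ s, t = s + 2 := ⟨t - 2, by omega⟩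
  refine ⟨fun hn => ?_, fun ⟨k, hk⟩ => ?_⟩
  · have h4 : ¬4 ∣ n := by obtain ⟨k, rfl⟩ := hn; omega
    rw [P1_of_odd hn, P2_eq_zero_of_not_dvd (by omega) h4]
    push_cast; ring
  obtain ⟨j, rfl | rfl⟩ := Int.even_or_odd' k
  · rw [show n = 4 * j by omega, P2_four_mul, show 4 * j = 2 * (2 * j) by ring, P1_two_mul,
      P1_two_mul]
    push_cast; ring
  · rw [show n = 2 * (2 * j + 1) by omega, P1_two_mul, P1_of_odd (odd_two_mul_add_one j),
      P2_eq_zero_of_not_dvd (by omega) (by omega)]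
    push_cast; ring
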